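/- arXiv:1703.08506 — 2 statements merged into one kernel-verified Lean document; each statement's English description precedes it below -/
import Mathlib

section
/- Let (M,F) be a Finsler submanifold of (M̃,F̃) with ambient Finsler–Ehresmann connection HTM̃₀ and normal pulled-back bundle π*TM^⊥. Then the induced Finsler–Ehresmann connection HTM₀ is a vector subbundle of HTM̃₀|_{TM₀} ⊕ θ̃⁻¹(π*TM^⊥). -/
open scoped RealInnerProductSpace

/-!
Write `VTM₀ = Vt ⊓ θ̃⁻¹(π*TM)` for the induced vertical space and
`B = HTM̃₀ ⊕ (Vt ⊓ θ̃⁻¹(π*TM^⊥))` for the target. Since `θ̃` maps `VTM̃₀` onto `π*TM̃`, splitting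
`θ̃ v` along `π*TM ⊕ π*TM^⊥` shows `VTM₀ ⊔ B` is the whole space; and `B` is orthogonal to
`VTM₀`, because `HTM̃₀ = VTM̃₀ᗮ` and the Sasaki metric transfers `g̃`-orthogonality. In the modular
lattice of submodules these two facts force `VTM₀ᗮ = B`, and `HTM₀ ≤ VTM₀ᗮ`.
-/

namespace Submodule

theorem orthogonal_eq_of_codisjoint {𝕜 E : Type*} [RCLike 𝕜] [NormedAddCommGroup E]
    [InnerProductSpace 𝕜 E] {A B : Submodule 𝕜 E} (hAB : Codisjoint A B) (hB : B ≤ Aᗮ) :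
    Aᗮ = B :=
  calc Aᗮ = (B ⊔ A) ⊓ Aᗮ := by rw [sup_comm, hAB.eq_top, top_inf_eq]
    _ = B ⊔ A ⊓ Aᗮ := sup_inf_assoc_of_le A hB
    _ = B := by rw [A.inf_orthogonal_eq_bot, sup_bot_eq]

variable {R M N : Type*} [Ring R] [AddCommGroup M] [Module R M] [AddCommGroup N] [Module R N]

theorem le_inf_comap_sup_inf_comap {f : M →ₗ[R] N} {V : Submodule R M} {P Q : Submodule R N}
    (hP : P ≤ V.map f) (hPQ : Codisjoint P Q) :
    V ≤ V ⊓ P.comap f ⊔ V ⊓ Q.comap f := by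
  intro v hv
  obtain ⟨p, q, hp, hq, hpq⟩ := codisjoint_iff_exists_add_eq.mp hPQ (f v)
  obtain ⟨u, hu, rfl⟩ := hP hp
  have hvu : f (v - u) = q := by rw [map_sub, ← hpq, add_sub_cancel_left]
  rw [← add_sub_cancel u v]
  exact add_mem_sup ⟨hu, hp⟩ ⟨sub_mem hv hu, by simpa [hvu] using hq⟩

theorem codisjoint_inf_comap_ker_sup_inf_comap {f : M →ₗ[R] N} {V : Submodule R M}
    {P Q : Submodule R N} (hV : Codisjoint (LinearMap.ker f) V) (hP : P ≤ V.map f)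
    (hPQ : Codisjoint P Q) :
    Codisjoint (V ⊓ P.comap f) (LinearMap.ker f ⊔ V ⊓ Q.comap f) := by
  rw [codisjoint_iff_le_sup, ← hV.eq_top]
  calc LinearMap.ker f ⊔ V
      ≤ LinearMap.ker f ⊔ (V ⊓ P.comap f ⊔ V ⊓ Q.comap f) :=
        sup_le_sup_left (le_inf_comap_sup_inf_comap hP hPQ) _
    _ = V ⊓ P.comap f ⊔ (LinearMap.ker f ⊔ V ⊓ Q.comap f) := sup_left_comm _ _ _

end Submodule

theorem stmt10_general {T W : Type*} [NormedAddCommGroup T] [InnerProductSpace ℝ T]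
    [AddCommGroup W] [Module ℝ W]
    (θt : T →ₗ[ℝ] W)                                  -- the Finsler–Ehresmann form θ̃
    (Vt : Submodule ℝ T)                              -- the vertical subbundle VTM̃₀
    (hcompl : IsCompl (LinearMap.ker θt) Vt)          -- TTM̃₀ = HTM̃₀ ⊕ VTM̃₀, HTM̃₀ = ker θ̃
    (hH : LinearMap.ker θt = Vtᗮ)                     -- HTM̃₀ is Sasaki-orthogonal to VTM̃₀
    (hsurj : ∀ w : W, ∃ x ∈ Vt, θt x = w)             -- θ̃ : VTM̃₀ ≅ π*TM̃
    (WT Wperp : Submodule ℝ W)                        -- π*TM and π*TM^⊥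
    (hW : IsCompl WT Wperp)                           -- π*TM̃|_{TM₀} = π*TM ⊕ π*TM^⊥
    (horth : ∀ x ∈ Vt ⊓ Submodule.comap θt WT,
      ∀ z ∈ Vt ⊓ Submodule.comap θt Wperp, ⟪x, z⟫ = 0) -- Sasaki transfers g̃-orthogonality
    (HTM0 : Submodule ℝ T)                            -- the induced Ehresmann connection HTM₀
    (hHTM0 : HTM0 ≤ (Vt ⊓ Submodule.comap θt WT)ᗮ) :  -- HTM₀ is orthogonal to VTM₀
    HTM0 ≤ (LinearMap.ker θt) ⊔ (Vt ⊓ Submodule.comap θt Wperp) := by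
  have hWT : WT ≤ Vt.map θt := fun w _ ↦ hsurj w
  have hcodisj := Submodule.codisjoint_inf_comap_ker_sup_inf_comap hcompl.codisjoint hWT
    hW.codisjoint
  have hperp : LinearMap.ker θt ⊔ Vt ⊓ Submodule.comap θt Wperp ≤
      (Vt ⊓ Submodule.comap θt WT)ᗮ :=
    sup_le (hH ▸ Submodule.orthogonal_le inf_le_left)
      (Submodule.isOrtho_iff_le.mp (Submodule.isOrtho_iff_inner_eq.mpr horth).symm)
  exact hHTM0.trans (Submodule.orthogonal_eq_of_codisjoint hcodisj hperp).le

/-- Pointwise (fiberwise) formulation: `T` is the fiber of `TTM̃₀` over a point of `TM₀`,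
equipped with the Sasaki-type inner product; `θ̃ : T → W` is the ambient Finsler–Ehresmann
form with values in the fiber `W` of `π*TM̃`, whose kernel is the ambient horizontal bundle
`HTM̃₀`; `Vt` is the vertical subbundle `VTM̃₀`, complementary to the kernel and with the
horizontal space its Sasaki-orthogonal complement; `W = WT ⊕ Wperp` is the g̃-orthogonal
decomposition `π*TM̃|_{TM₀} = π*TM ⊕ π*TM^⊥`.  The induced vertical bundle is
`VTM₀ = Vt ⊓ θ̃⁻¹(π*TM)` and the induced horizontal bundle `HTM₀` is orthogonal to it.
Then `HTM₀` is contained in (is a subbundle of) `HTM̃₀|_{TM₀} ⊕ θ̃⁻¹(π*TM^⊥)`. -/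
theorem stmt10 {T W : Type*} [NormedAddCommGroup T] [InnerProductSpace ℝ T]
    [FiniteDimensional ℝ T] [AddCommGroup W] [Module ℝ W]
    (θt : T →ₗ[ℝ] W)                                  -- the Finsler–Ehresmann form θ̃
    (Vt : Submodule ℝ T)                              -- the vertical subbundle VTM̃₀
    (hcompl : IsCompl (LinearMap.ker θt) Vt)          -- TTM̃₀ = HTM̃₀ ⊕ VTM̃₀, HTM̃₀ = ker θ̃
    (hH : LinearMap.ker θt = Vtᗮ)                     -- HTM̃₀ is Sasaki-orthogonal to VTM̃₀
    (hsurj : ∀ w : W, ∃ x ∈ Vt, θt x = w)             -- θ̃ : VTM̃₀ ≅ π*TM̃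
    (WT Wperp : Submodule ℝ W)                        -- π*TM and π*TM^⊥
    (hW : IsCompl WT Wperp)                           -- π*TM̃|_{TM₀} = π*TM ⊕ π*TM^⊥
    (horth : ∀ x ∈ Vt ⊓ Submodule.comap θt WT,
      ∀ z ∈ Vt ⊓ Submodule.comap θt Wperp, ⟪x, z⟫ = 0) -- Sasaki transfers g̃-orthogonality
    (HTM0 : Submodule ℝ T)                            -- the induced Ehresmann connection HTM₀
    (hHTM0 : HTM0 ≤ (Vt ⊓ Submodule.comap θt WT)ᗮ) :  -- HTM₀ is orthogonal to VTM₀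
    HTM0 ≤ (LinearMap.ker θt) ⊔ (Vt ⊓ Submodule.comap θt Wperp) :=
  stmt10_general θt Vt hcompl hH hsurj WT Wperp hW horth HTM0 hHTM0
end

section
/- Along a Finsler submanifold, the horizontal vector field δ/δu^α decomposes as δ/δu^α = B^i_α δ/δx^i + H^a_α 𝔑_a^V, where H^a_α = 𝔑̃^a_i(B^i_{α0} + B^j_α Ñ^i_j) and 𝔑_a^V = θ̃⁻¹(𝔑_a) is the vertical correspondent of the normal frame field 𝔑_a. -/
/-!
Since `[B̃; 𝔑̃]` inverts `[B, 𝔑]`, we have the resolution of the identity `B B̃ + 𝔑 𝔑̃ = 1`.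
Applied to `B^i_{α0} + Ñ^i_j B^j_α`, it splits this vector into its tangential part
`B^i_λ N^λ_α` and its normal part `𝔑^i_a H^a_α`, which is exactly the vertical part of the claim.
-/

open Matrix

theorem Matrix.mulVec_mulVec_add_mulVec_mulVec_of_mul_add_mul_eq_one
    {ι κ μ R : Type*} [Fintype ι] [Fintype κ] [Fintype μ] [DecidableEq ι] [Semiring R]
    {P : Matrix ι κ R} {P' : Matrix κ ι R} {Q : Matrix ι μ R} {Q' : Matrix μ ι R}
    (h : P * P' + Q * Q' = 1) (c : ι → R) :
    P *ᵥ (P' *ᵥ c) + Q *ᵥ (Q' *ᵥ c) = c := by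
  rw [mulVec_mulVec, mulVec_mulVec, ← add_mulVec, h, one_mulVec]

theorem Matrix.sub_mulVec_mulVec_add_eq_neg_add_mulVec_mulVec_add
    {ι κ μ R : Type*} [Fintype ι] [Fintype κ] [Fintype μ] [DecidableEq ι] [Ring R]
    {P : Matrix ι κ R} {P' : Matrix κ ι R} {Q : Matrix ι μ R} {Q' : Matrix μ ι R}
    (h : P * P' + Q * Q' = 1) (b c : ι → R) :
    b - P *ᵥ (P' *ᵥ (b + c)) = -c + Q *ᵥ (Q' *ᵥ (b + c)) := by
  have := mulVec_mulVec_add_mulVec_mulVec_of_mul_add_mul_eq_one h (b + c)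
  rw [← eq_sub_iff_add_eq'] at this
  rw [this]; abel

theorem stmt11_general {m n : ℕ}
    (B : Fin (m + n) → Fin m → ℝ)              -- B^i_α
    (Ntil : Fin (m + n) → Fin (m + n) → ℝ)     -- Ñ^i_j
    (Bt : Fin m → Fin (m + n) → ℝ)             -- B̃^α_i
    (NN : Fin (m + n) → Fin n → ℝ)             -- 𝔑^i_a
    (NNt : Fin n → Fin (m + n) → ℝ)            -- 𝔑̃^a_i
    -- [B̃; 𝔑̃] inverts [B, 𝔑]:
    (hinv : ∀ i j : Fin (m + n),
      (∑ lam, B i lam * Bt lam j) + ∑ a, NN i a * NNt a j = if i = j then 1 else 0)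
    (B0 : Fin (m + n) → Fin m → ℝ)
    (N : Fin m → Fin m → ℝ)
    (hN : ∀ lam α, N lam α = ∑ i, Bt lam i * (B0 i α + ∑ j, Ntil i j * B j α))
    (H : Fin n → Fin m → ℝ)
    (hH : ∀ a α, H a α = ∑ i, NNt a i * (B0 i α + ∑ j, Ntil i j * B j α)) :
    ∀ α : Fin m,
      -- δ/δu^α, as the pair (dx-components, dy-components), equals B^i_α δ/δx^i + H^a_α 𝔑_a^V:
      ((fun i => B i α, fun i => B0 i α - ∑ lam, B i lam * N lam α) :
          (Fin (m + n) → ℝ) × (Fin (m + n) → ℝ)) =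
        (fun i => B i α, fun i => -∑ j, Ntil i j * B j α + ∑ a, H a α * NN i a) := by
  intro α
  have hframe : of B * of Bt + of NN * of NNt = 1 := by
    ext i j
    simpa [mul_apply, one_apply] using hinv i j
  have hNα : (fun lam => N lam α) = of Bt *ᵥ ((B0 · α) + (of Ntil *ᵥ (B · α))) := funext (hN · α)
  have hHα : (fun a => H a α) = of NNt *ᵥ ((B0 · α) + (of Ntil *ᵥ (B · α))) := funext (hH · α)
  have hvertical :=
    sub_mulVec_mulVec_add_eq_neg_add_mulVec_mulVec_add hframe (B0 · α) (of Ntil *ᵥ (B · α))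
  rw [← hNα, ← hHα] at hvertical
  refine Prod.ext rfl (funext fun i => ?_)
  simpa [mulVec, dotProduct, mul_comm] using congrFun hvertical i

/-- Along a Finsler submanifold, the horizontal field `δ/δu^α` (pushed forward to `TTM̃₀`,
written in the coordinates `(dx-components, dy-components)`) decomposes as
`δ/δu^α = B^i_α δ/δx^i + H^a_α 𝔑_a^V`, where `H^a_α = 𝔑̃^a_i (B^i_{α0} + B^j_α Ñ^i_j)` and
`𝔑_a^V = θ̃⁻¹(𝔑_a)` is the vertical correspondent (dy-components `𝔑^i_a`) of `𝔑_a`. -/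
theorem stmt11 {m n : ℕ}
    (B : Fin (m + n) → Fin m → ℝ)              -- B^i_α
    (B2 : Fin (m + n) → Fin m → Fin m → ℝ)     -- B^i_{αλ}
    (Ntil : Fin (m + n) → Fin (m + n) → ℝ)     -- Ñ^i_j
    (Bt : Fin m → Fin (m + n) → ℝ)             -- B̃^α_i
    (NN : Fin (m + n) → Fin n → ℝ)             -- 𝔑^i_a
    (NNt : Fin n → Fin (m + n) → ℝ)            -- 𝔑̃^a_i
    (v : Fin m → ℝ)
    -- [B̃; 𝔑̃] inverts [B, 𝔑]:
    (hinv : ∀ i j : Fin (m + n),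
      (∑ lam, B i lam * Bt lam j) + ∑ a, NN i a * NNt a j = if i = j then 1 else 0)
    (B0 : Fin (m + n) → Fin m → ℝ)
    (hB0 : ∀ i α, B0 i α = ∑ lam, B2 i α lam * v lam)
    (N : Fin m → Fin m → ℝ)
    (hN : ∀ lam α, N lam α = ∑ i, Bt lam i * (B0 i α + ∑ j, Ntil i j * B j α))
    (H : Fin n → Fin m → ℝ)
    (hH : ∀ a α, H a α = ∑ i, NNt a i * (B0 i α + ∑ j, Ntil i j * B j α)) :
    ∀ α : Fin m,
      -- δ/δu^α, as the pair (dx-components, dy-components), equals B^i_α δ/δx^i + H^a_α 𝔑_a^V: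
      ((fun i => B i α, fun i => B0 i α - ∑ lam, B i lam * N lam α) :
          (Fin (m + n) → ℝ) × (Fin (m + n) → ℝ)) =
        (fun i => B i α, fun i => -∑ j, Ntil i j * B j α + ∑ a, H a α * NN i a) :=
  stmt11_general B Ntil Bt NN NNt hinv B0 N hN H hH
end
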